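/- arXiv:0705.2503 — 2 statements merged into one kernel-verified Lean document; each statement's English description precedes it below -/
import Mathlib

section
/- Let 𝒯* ⊆ 𝒯 be an r-test set with m* = |𝒯*|, let #_B be the number of item pairs with ⊥(a,𝒯*) = r, and let T̄ ⊆ 𝒯 be any partial family. Call an item pair a alive if ⊥(a,T̄) < r. Then ∑_{alive a} ⊥(a, 𝒯* \ T̄) ≥ ((r+1)/r)·#(T̄) − #_B, where ⊥(a, 𝒯* \ T̄) is the number of tests in 𝒯* not in T̄ that differentiate a. -/
open Finset

/-- The set of item pairs: 2-element subsets of the item set `S` (here the whole type `α`). -/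
def itemPairs (α : Type*) [Fintype α] [DecidableEq α] : Finset (Finset α) :=
  Finset.univ.filter fun a => a.card = 2

/-- `⊥(a, F)`: the number of tests in the family `F` that differentiate the item pair `a`,
i.e. the tests `T` with `|T ∩ a| = 1`. -/
def diffBy {α : Type*} [DecidableEq α] (a : Finset α) (F : Finset (Finset α)) : ℕ :=
  (F.filter fun T => (T ∩ a).card = 1).card

/-- `F` is an `r`-test set for the collection `𝒯`: `F ⊆ 𝒯` and every item pair is
differentiated by at least `r` tests of `F`. -/
def IsRTestSet {α : Type*} [Fintype α] [DecidableEq α]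
    (r : ℕ) (𝒯 F : Finset (Finset α)) : Prop :=
  F ⊆ 𝒯 ∧ ∀ a ∈ itemPairs α, r ≤ diffBy a F

/-- The differentiation measure `#(T̄) = ∑_a max (r - ⊥(a,T̄), 0)` (truncated subtraction). -/
def dmeasure {α : Type*} [Fintype α] [DecidableEq α]
    (r : ℕ) (F : Finset (Finset α)) : ℕ :=
  ∑ a ∈ itemPairs α, (r - diffBy a F)

/-- A run of the set cover greedy algorithm SGA: a sequence of distinct tests from `𝒯`,
each chosen greedily to minimize the differentiation measure of the selected family,
selections continue while the measure is positive, and the final measure is `0`. -/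
structure SGARun {α : Type*} [Fintype α] [DecidableEq α]
    (r : ℕ) (𝒯 : Finset (Finset α)) (L : List (Finset α)) : Prop where
  nodup : L.Nodup
  mem : ∀ T ∈ L, T ∈ 𝒯
  greedy : ∀ i : Fin L.length, ∀ T ∈ 𝒯, T ∉ (L.take i).toFinset →
      dmeasure r (insert (L.get i) (L.take i).toFinset) ≤
        dmeasure r (insert T (L.take i).toFinset)
  pos : ∀ i < L.length, 0 < dmeasure r (L.take i).toFinset
  done : dmeasure r L.toFinset = 0

theorem diffBy_le_diffBy_sdiff_add {α : Type*} [DecidableEq α] (a : Finset α)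
    (F G : Finset (Finset α)) : diffBy a F ≤ diffBy a (F \ G) + diffBy a G := by
  unfold diffBy
  calc (F.filter fun T => (T ∩ a).card = 1).card
      ≤ ((F \ G ∪ G).filter fun T => (T ∩ a).card = 1).card := by
        rw [sdiff_union_self_eq_union]
        exact card_le_card (filter_subset_filter _ subset_union_left)
    _ ≤ _ := by
        rw [filter_union]
        exact card_union_le _ _

theorem dmeasure_eq_sum_alive {α : Type*} [Fintype α] [DecidableEq α]
    (r : ℕ) (F : Finset (Finset α)) :
    dmeasure r F = ∑ a ∈ (itemPairs α).filter (fun a => diffBy a F < r), (r - diffBy a F) :=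
  (sum_filter_of_ne fun _ _ h => Nat.sub_pos_iff_lt.mp (Nat.pos_of_ne_zero h)).symm

/-- For an alive pair the shortfall `s = r - d` satisfies `s / r ≤ 1`, and the tests of the
`r`-test set outside `T̄` make up the shortfall, with one test to spare unless `D = r`. -/
theorem succ_div_mul_shortfall_sub_le {r d D E : ℕ} (hd : d < r) (hD : r ≤ D)
    (hDE : D ≤ E + d) :
    ((r : ℝ) + 1) / r * ((r - d : ℕ) : ℝ) - (if D = r then 1 else 0) ≤ E := by
  have hr : (0 : ℝ) < r := by exact_mod_cast (Nat.zero_le d).trans_lt hd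
  have hs : ((r - d : ℕ) : ℝ) ≤ r := by exact_mod_cast Nat.sub_le r d
  have hspare : ((r - d : ℕ) : ℝ) + (if D = r then 0 else 1) ≤ E := by
    split_ifs with h
    · exact_mod_cast (by omega : r - d ≤ E)
    · exact_mod_cast (by omega : r - d + 1 ≤ E)
  have hscaled : ((r : ℝ) + 1) / r * ((r - d : ℕ) : ℝ) ≤ ((r - d : ℕ) : ℝ) + 1 := by
    rw [add_div, div_self hr.ne', add_mul, one_mul, one_div_mul_eq_div]
    gcongr
    exact (div_le_one hr).mpr hs
  split_ifs at hspare ⊢ <;> linarith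

theorem stmt_5_general {α : Type*} [Fintype α] [DecidableEq α]
    (r : ℕ)
    (𝒯 Fstar : Finset (Finset α)) (hFstar : IsRTestSet r 𝒯 Fstar)
    (B : ℕ) (hBdef : B = ((itemPairs α).filter fun a => diffBy a Fstar = r).card)
    (Tbar : Finset (Finset α)) :
    (((r : ℝ) + 1) / (r : ℝ)) * (dmeasure r Tbar : ℝ) - (B : ℝ) ≤
      ∑ a ∈ (itemPairs α).filter (fun a => diffBy a Tbar < r),
        (diffBy a (Fstar \ Tbar) : ℝ) := by
  set alive := (itemPairs α).filter (fun a => diffBy a Tbar < r)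
  have hB : ∑ a ∈ alive, (if diffBy a Fstar = r then (1 : ℝ) else 0) ≤ B := by
    rw [sum_boole, hBdef]
    exact_mod_cast card_le_card (filter_subset_filter _ (filter_subset _ _))
  calc ((r : ℝ) + 1) / r * (dmeasure r Tbar : ℝ) - B
      ≤ ∑ a ∈ alive, (((r : ℝ) + 1) / r * ((r - diffBy a Tbar : ℕ) : ℝ)
          - (if diffBy a Fstar = r then 1 else 0)) := by
        rw [sum_sub_distrib, ← mul_sum, dmeasure_eq_sum_alive, Nat.cast_sum]
        linarith
    _ ≤ ∑ a ∈ alive, (diffBy a (Fstar \ Tbar) : ℝ) := by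
        refine sum_le_sum fun a ha => ?_
        obtain ⟨hpair, halive⟩ := mem_filter.mp ha
        exact succ_div_mul_shortfall_sub_le halive (hFstar.2 a hpair)
          (diffBy_le_diffBy_sdiff_add a Fstar Tbar)

/-- `∑_{alive a} ⊥(a, 𝒯* \ T̄) ≥ ((r+1)/r)·#(T̄) − #_B`, where a pair `a` is
alive if `⊥(a,T̄) < r`, and `#_B` is the number of pairs with `⊥(a,𝒯*) = r`. -/
theorem stmt_5 {α : Type*} [Fintype α] [DecidableEq α]
    (r : ℕ) (hr : 1 ≤ r) (hn : 2 ≤ Fintype.card α)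
    (𝒯 Fstar : Finset (Finset α)) (hFstar : IsRTestSet r 𝒯 Fstar)
    (B : ℕ) (hBdef : B = ((itemPairs α).filter fun a => diffBy a Fstar = r).card)
    (Tbar : Finset (Finset α)) (hTbar : Tbar ⊆ 𝒯) :
    (((r : ℝ) + 1) / (r : ℝ)) * (dmeasure r Tbar : ℝ) - (B : ℝ) ≤
      ∑ a ∈ (itemPairs α).filter (fun a => diffBy a Tbar < r),
        (diffBy a (Fstar \ Tbar) : ℝ) :=
  stmt_5_general r 𝒯 Fstar hFstar B hBdef Tbar
end

section
/- Let 𝒯* ⊆ 𝒯 be an r-test set with m* = |𝒯*|, let #_B be the number of item pairs with ⊥(a,𝒯*) = r, and let T̄ ⊆ 𝒯 be a partial family with #(T̄) > 0. Then 𝒯* \ T̄ is nonempty and there exists a test T ∈ 𝒯* \ T̄ such that #(T, T̄) ≥ (1/m*)·(((r+1)/r)·#(T̄) − #_B). -/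
/-!
Call an item pair deficient if fewer than `r` tests of `T̄` differentiate it. For `T ∉ T̄`,
`#(T, T̄)` is the number of deficient pairs that `T` differentiates. A deficient pair `a` is
differentiated by at least `r - ⊥(a, T̄)` tests of `𝒯* \ T̄`, and by one more unless
`⊥(a, 𝒯*) = r`. Double counting therefore gives
`∑_{T ∈ 𝒯* \ T̄} #(T, T̄) ≥ #(T̄) + D - #_B`, where `D ≥ #(T̄) / r` is the number of deficient
pairs, and a test of maximal gain carries at least a `1/m*` share of this sum.
-/

open Finset

section

variable {α : Type*} [DecidableEq α]

theorem diffBy_insert (a T : Finset α) {F : Finset (Finset α)} (hT : T ∉ F) :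
    diffBy a (insert T F) = diffBy a F + if (T ∩ a).card = 1 then 1 else 0 := by
  unfold diffBy
  rw [filter_insert]
  split_ifs
  · exact card_insert_of_notMem fun hmem => hT (mem_of_mem_filter T hmem)
  · rfl

theorem diffBy_le_diffBy_sdiff_add_diffBy (a : Finset α) (G F : Finset (Finset α)) :
    diffBy a G ≤ diffBy a (G \ F) + diffBy a F := by
  unfold diffBy
  calc #(G.filter _) ≤ #((G \ F ∪ F).filter fun T => (T ∩ a).card = 1) :=
        card_le_card <| filter_subset_filter _ <| by
          rw [sdiff_union_self_eq_union]; exact subset_union_left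
    _ ≤ _ := by rw [filter_union]; exact card_union_le _ _

variable [Fintype α]

def deficientPairs (r : ℕ) (F : Finset (Finset α)) : Finset (Finset α) :=
  (itemPairs α).filter fun a => diffBy a F < r

def gain (r : ℕ) (F : Finset (Finset α)) (T : Finset α) : ℕ :=
  ((deficientPairs r F).filter fun a => (T ∩ a).card = 1).card

variable {r : ℕ} {F : Finset (Finset α)}

theorem dmeasure_insert_add_gain {T : Finset α} (hT : T ∉ F) :
    dmeasure r (insert T F) + gain r F T = dmeasure r F := by
  rw [gain, deficientPairs, filter_filter, card_filter, dmeasure, dmeasure,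
    ← sum_add_distrib]
  refine sum_congr rfl fun a _ => ?_
  rw [diffBy_insert a T hT]
  split_ifs <;> omega

theorem dmeasure_eq_sum_deficientPairs :
    dmeasure r F = ∑ a ∈ deficientPairs r F, (r - diffBy a F) := by
  rw [dmeasure, deficientPairs, sum_filter_of_ne]
  intro a _ h
  omega

theorem dmeasure_le_mul_card_deficientPairs : dmeasure r F ≤ r * #(deficientPairs r F) := by
  rw [dmeasure_eq_sum_deficientPairs, mul_comm, ← smul_eq_mul, ← sum_const]
  exact sum_le_sum fun a _ => Nat.sub_le _ _

theorem sum_gain_eq_sum_diffBy (G : Finset (Finset α)) :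
    ∑ T ∈ G, gain r F T = ∑ a ∈ deficientPairs r F, diffBy a G := by
  simp only [gain, diffBy, card_filter]
  exact sum_comm

variable {G : Finset (Finset α)} (hG : ∀ a ∈ itemPairs α, r ≤ diffBy a G)
include hG

theorem dmeasure_add_card_deficientPairs_le :
    dmeasure r F + #(deficientPairs r F) ≤
      ∑ T ∈ G \ F, gain r F T + #((itemPairs α).filter fun a => diffBy a G = r) := by
  have tight_le : #((deficientPairs r F).filter fun a => diffBy a G = r) ≤
      #((itemPairs α).filter fun a => diffBy a G = r) :=
    card_le_card <| filter_subset_filter _ <| filter_subset _ _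
  have per_pair : ∀ a ∈ deficientPairs r F,
      (r - diffBy a F) + 1 ≤ diffBy a (G \ F) + if diffBy a G = r then 1 else 0 := by
    intro a ha
    have := hG a (mem_filter.1 ha).1
    have := diffBy_le_diffBy_sdiff_add_diffBy a G F
    have := (mem_filter.1 ha).2
    split_ifs <;> omega
  calc dmeasure r F + #(deficientPairs r F)
      = ∑ a ∈ deficientPairs r F, ((r - diffBy a F) + 1) := by
        rw [dmeasure_eq_sum_deficientPairs, sum_add_distrib, card_eq_sum_ones]
    _ ≤ ∑ a ∈ deficientPairs r F, (diffBy a (G \ F) + if diffBy a G = r then 1 else 0) :=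
        sum_le_sum per_pair
    _ ≤ _ := by
        rw [sum_add_distrib, sum_gain_eq_sum_diffBy, ← card_filter]
        exact Nat.add_le_add_left tight_le _

theorem sdiff_nonempty_of_dmeasure_pos (hF : 0 < dmeasure r F) : (G \ F).Nonempty := by
  obtain ⟨a, ha⟩ : (deficientPairs r F).Nonempty := by
    rw [dmeasure_eq_sum_deficientPairs] at hF
    exact nonempty_of_sum_ne_zero hF.ne'
  have := hG a (mem_filter.1 ha).1
  have := diffBy_le_diffBy_sdiff_add_diffBy a G F
  have := (mem_filter.1 ha).2
  obtain ⟨T, hT⟩ := card_pos.1 (show 0 < diffBy a (G \ F) by omega)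
  exact ⟨T, (mem_filter.1 hT).1⟩

theorem exists_mem_sdiff_dmeasure_add_card_deficientPairs_le (hF : 0 < dmeasure r F) :
    ∃ T ∈ G \ F, dmeasure r F + #(deficientPairs r F) ≤
      #(G \ F) * gain r F T + #((itemPairs α).filter fun a => diffBy a G = r) := by
  obtain ⟨T, hT, hmax⟩ :=
    exists_max_image (G \ F) (gain r F) (sdiff_nonempty_of_dmeasure_pos hG hF)
  refine ⟨T, hT, (dmeasure_add_card_deficientPairs_le hG).trans ?_⟩
  rw [← smul_eq_mul]
  exact Nat.add_le_add_right (sum_le_card_nsmul _ _ _ hmax) _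

end

theorem stmt_6_general {α : Type*} [Fintype α] [DecidableEq α]
    (r : ℕ)
    (𝒯 Fstar : Finset (Finset α)) (hFstar : IsRTestSet r 𝒯 Fstar)
    (B : ℕ) (hBdef : B = ((itemPairs α).filter fun a => diffBy a Fstar = r).card)
    (Tbar : Finset (Finset α))
    (hpos : 0 < dmeasure r Tbar) :
    (Fstar \ Tbar).Nonempty ∧
      ∃ T ∈ Fstar \ Tbar,
        (1 / (Fstar.card : ℝ)) *
            ((((r : ℝ) + 1) / (r : ℝ)) * (dmeasure r Tbar : ℝ) - (B : ℝ)) ≤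
          (dmeasure r Tbar : ℝ) - (dmeasure r (insert T Tbar) : ℝ) := by
  have hne := sdiff_nonempty_of_dmeasure_pos hFstar.2 hpos
  obtain ⟨T, hT, hcount⟩ := exists_mem_sdiff_dmeasure_add_card_deficientPairs_le hFstar.2 hpos
  refine ⟨hne, T, hT, ?_⟩
  have hdef := dmeasure_le_mul_card_deficientPairs (r := r) (F := Tbar)
  have hcard := card_le_card (sdiff_subset (s := Fstar) (t := Tbar))
  have hr : (0 : ℝ) < r := by exact_mod_cast Nat.pos_of_mul_pos_right (hpos.trans_le hdef)
  have hm : (0 : ℝ) < #Fstar := by exact_mod_cast hne.card_pos.trans_le hcard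
  have hshare : (#(Fstar \ Tbar) * gain r Tbar T : ℝ) ≤ #Fstar * gain r Tbar T :=
    mul_le_mul_of_nonneg_right (by exact_mod_cast hcard) (Nat.cast_nonneg _)
  have hsplit : ((r : ℝ) + 1) / r * dmeasure r Tbar = dmeasure r Tbar + dmeasure r Tbar / r := by
    field_simp
  have hdeficient : (dmeasure r Tbar : ℝ) / r ≤ #(deficientPairs r Tbar) := by
    rw [div_le_iff₀ hr, mul_comm]
    exact_mod_cast hdef
  have hgain : (dmeasure r Tbar : ℝ) - dmeasure r (insert T Tbar) = gain r Tbar T := by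
    rw [← dmeasure_insert_add_gain (mem_sdiff.1 hT).2]; push_cast; ring
  rw [← hBdef, ← Nat.cast_le (α := ℝ)] at hcount
  push_cast at hcount
  rw [hgain, one_div, inv_mul_le_iff₀ hm, hsplit]
  linarith

/-- if `#(T̄) > 0` then `𝒯* \ T̄` is nonempty and some `T ∈ 𝒯* \ T̄` has
`#(T,T̄) ≥ (1/m*)·(((r+1)/r)·#(T̄) − #_B)`, where `#(T,T̄) = #(T̄) − #(T̄ ∪ {T})`. -/
theorem stmt_6 {α : Type*} [Fintype α] [DecidableEq α]
    (r : ℕ) (hr : 1 ≤ r) (hn : 2 ≤ Fintype.card α)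
    (𝒯 Fstar : Finset (Finset α)) (hFstar : IsRTestSet r 𝒯 Fstar)
    (B : ℕ) (hBdef : B = ((itemPairs α).filter fun a => diffBy a Fstar = r).card)
    (Tbar : Finset (Finset α)) (hTbar : Tbar ⊆ 𝒯)
    (hpos : 0 < dmeasure r Tbar) :
    (Fstar \ Tbar).Nonempty ∧
      ∃ T ∈ Fstar \ Tbar,
        (1 / (Fstar.card : ℝ)) *
            ((((r : ℝ) + 1) / (r : ℝ)) * (dmeasure r Tbar : ℝ) - (B : ℝ)) ≤
          (dmeasure r Tbar : ℝ) - (dmeasure r (insert T Tbar) : ℝ) :=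
  stmt_6_general r 𝒯 Fstar hFstar B hBdef Tbar hpos
end
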